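/- arXiv:1611.09478 — 5 statements merged into one kernel-verified Lean document; each statement's English description precedes it below -/
import Mathlib

section
/- Let b, c, k, W₀, B₀ be real numbers with b + c > 0 and k > 0. With W(t) and B(t) the solutions of W'(t) = (k−b)W(t) + cB(t), B'(t) = bW(t) + (k−c)B(t), W(0)=W₀, B(0)=B₀, we have lim_{t→∞} W(t)/exp(k·t) = (c/(b+c))·(W₀+B₀) and lim_{t→∞} B(t)/exp(k·t) = (b/(b+c))·(W₀+B₀). -/
/-!
The total `W + B` solves `S' = k S`, and the combination `b W - c B` solves `D' = (k - (b + c)) D`,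
so both are explicit exponentials. Since `W = (c S + D) / (b + c)` and `B = (b S - D) / (b + c)`,
dividing by `exp (k t)` leaves a constant plus a multiple of `exp (-(b + c) t)`, which tends to `0`.
-/

open Filter Topology Real

theorem eq_mul_exp_of_deriv_eq_mul {a : ℝ} {f : ℝ → ℝ} (hf : Differentiable ℝ f)
    (h : ∀ t, deriv f t = a * f t) (t : ℝ) : f t = f 0 * exp (a * t) := by
  have hderiv : ∀ s, HasDerivAt (fun s => f s * exp (-(a * s))) 0 s := by
    intro s
    have hexp : HasDerivAt (fun s : ℝ => exp (-(a * s))) (exp (-(a * s)) * -a) s := by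
      simpa using ((hasDerivAt_id s).const_mul a).neg.exp
    have hprod := (hf s).hasDerivAt.mul hexp
    rwa [h s, show a * f s * exp (-(a * s)) + f s * (exp (-(a * s)) * -a) = 0 by ring] at hprod
  have hconst := is_const_of_deriv_eq_zero (fun s => (hderiv s).differentiableAt)
    (fun s => (hderiv s).deriv) t 0
  simp only [mul_zero, neg_zero, exp_zero, mul_one] at hconst
  rw [← hconst, mul_assoc, ← exp_add, neg_add_cancel, exp_zero, mul_one]

theorem tendsto_mul_exp_add_mul_exp_div_exp {s : ℝ} (hs : 0 < s) (k x y : ℝ) :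
    Tendsto (fun t => (x * exp (k * t) + y * exp ((k - s) * t)) / exp (k * t)) atTop (𝓝 x) := by
  have hdecay : Tendsto (fun t => exp (-(s * t))) atTop (𝓝 0) :=
    tendsto_exp_neg_atTop_nhds_zero.comp (tendsto_id.const_mul_atTop hs)
  have heq : ∀ t, (x * exp (k * t) + y * exp ((k - s) * t)) / exp (k * t)
      = x + y * exp (-(s * t)) := by
    intro t
    rw [show (k - s) * t = k * t + -(s * t) by ring, exp_add]
    field_simp
  simpa [heq] using (hdecay.const_mul y).const_add x

section BagchiPal

variable {b c k : ℝ} {W B : ℝ → ℝ} (hWd : Differentiable ℝ W) (hBd : Differentiable ℝ B)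
  (hW' : ∀ t, deriv W t = (k - b) * W t + c * B t)
  (hB' : ∀ t, deriv B t = b * W t + (k - c) * B t)
include hWd hBd hW' hB'

theorem add_eq_mul_exp (t : ℝ) : W t + B t = (W 0 + B 0) * exp (k * t) :=
  eq_mul_exp_of_deriv_eq_mul (f := fun t => W t + B t) (hWd.add hBd) (fun t => by
    rw [deriv_fun_add (hWd t) (hBd t), hW' t, hB' t]
    ring) t

theorem mul_sub_mul_eq_mul_exp (t : ℝ) :
    b * W t - c * B t = (b * W 0 - c * B 0) * exp ((k - (b + c)) * t) :=
  eq_mul_exp_of_deriv_eq_mul (f := fun t => b * W t - c * B t)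
    ((hWd.const_mul b).sub (hBd.const_mul c)) (fun t => by
      rw [deriv_fun_sub ((hWd t).const_mul b) ((hBd t).const_mul c), deriv_const_mul _ (hWd t),
        deriv_const_mul _ (hBd t), hW' t, hB' t]
      ring) t

end BagchiPal

theorem stmt2_general (b c k W0 B0 : ℝ) (hbc : 0 < b + c)
    (W B : ℝ → ℝ) (hWd : Differentiable ℝ W) (hBd : Differentiable ℝ B)
    (hW' : ∀ t, deriv W t = (k - b) * W t + c * B t)
    (hB' : ∀ t, deriv B t = b * W t + (k - c) * B t)
    (hW0 : W 0 = W0) (hB0 : B 0 = B0) :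
    Tendsto (fun t => W t / Real.exp (k * t)) atTop (nhds ((c / (b + c)) * (W0 + B0))) ∧
    Tendsto (fun t => B t / Real.exp (k * t)) atTop (nhds ((b / (b + c)) * (W0 + B0))) := by
  have hsum := add_eq_mul_exp hWd hBd hW' hB'
  have hdiff := mul_sub_mul_eq_mul_exp hWd hBd hW' hB'
  subst hW0 hB0
  set D0 := b * W 0 - c * B 0
  have hW : ∀ t, W t = c / (b + c) * (W 0 + B 0) * exp (k * t)
      + D0 / (b + c) * exp ((k - (b + c)) * t) := by
    intro t
    simp only [div_mul_eq_mul_div, ← add_div, eq_div_iff hbc.ne']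
    linear_combination c * hsum t + hdiff t
  have hB : ∀ t, B t = b / (b + c) * (W 0 + B 0) * exp (k * t)
      + -D0 / (b + c) * exp ((k - (b + c)) * t) := by
    intro t
    simp only [div_mul_eq_mul_div, ← add_div, eq_div_iff hbc.ne']
    linear_combination b * hsum t - hdiff t
  exact ⟨(tendsto_mul_exp_add_mul_exp_div_exp hbc _ _ _).congr fun t => by rw [← hW t],
    (tendsto_mul_exp_add_mul_exp_div_exp hbc _ _ _).congr fun t => by rw [← hB t]⟩

/-- Asymptotics of the first moments of the Bagchi–Pal process. -/
theorem stmt2 (b c k W0 B0 : ℝ) (hbc : 0 < b + c) (hk : 0 < k)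
    (W B : ℝ → ℝ) (hWd : Differentiable ℝ W) (hBd : Differentiable ℝ B)
    (hW' : ∀ t, deriv W t = (k - b) * W t + c * B t)
    (hB' : ∀ t, deriv B t = b * W t + (k - c) * B t)
    (hW0 : W 0 = W0) (hB0 : B 0 = B0) :
    Tendsto (fun t => W t / Real.exp (k * t)) atTop (nhds ((c / (b + c)) * (W0 + B0))) ∧
    Tendsto (fun t => B t / Real.exp (k * t)) atTop (nhds ((b / (b + c)) * (W0 + B0))) :=
  stmt2_general b c k W0 B0 hbc W B hWd hBd hW' hB' hW0 hB0
end

section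
/- Fix n ≥ 1 and real numbers b, c with b ≠ 0 and nc + i(b−c) ≠ 0 for all 0 ≤ i ≤ n. Suppose a sequence K : Fin (n+1) → ℝ satisfies the recurrence (n·c + i·b − i·c)·K i = (n−i)·b·K (i+1) + i·c·K (i−1) for 1 ≤ i ≤ n−1, together with K 1 = (c/b)·K 0. Then K i = (c/b)^i · K 0 for all 0 ≤ i ≤ n. -/
/-! The recurrence expresses `K (i+1)` through `K i` and `K (i-1)` with leading coefficient
`(n - i) b ≠ 0`, so together with `K 0` and `K 1` it determines `K` on `0, …, n`.
The geometric sequence `(c/b)^i K 0` satisfies both the recurrence and the initial condition,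
hence it is `K`. -/

theorem eq_of_linearRecurrence {R : Type*} [Ring R] [IsDomain R] {n : ℕ} {a p q f g : ℕ → R}
    (ha : ∀ j, j + 2 ≤ n → a j ≠ 0)
    (hf : ∀ j, j + 2 ≤ n → a j * f (j + 2) = p j * f (j + 1) + q j * f j)
    (hg : ∀ j, j + 2 ≤ n → a j * g (j + 2) = p j * g (j + 1) + q j * g j)
    (h0 : f 0 = g 0) (h1 : f 1 = g 1) :
    ∀ i ≤ n, f i = g i := by
  intro i
  induction i using Nat.strong_induction_on with
  | _ i ih =>
    match i with
    | 0 => exact fun _ => h0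
    | 1 => exact fun _ => h1
    | j + 2 =>
      intro hj
      refine mul_left_cancel₀ (ha j hj) ?_
      rw [hf j hj, hg j hj, ih (j + 1) (by omega) (by omega), ih j (by omega) (by omega)]

theorem geom_div_pow_recurrence {b : ℝ} (hb : b ≠ 0) (c m x : ℝ) (j : ℕ) :
    (m - x) * b * (c / b) ^ (j + 2)
      = (m * c + x * b - x * c) * (c / b) ^ (j + 1) + -(x * c) * (c / b) ^ j := by
  obtain ⟨r, rfl⟩ : ∃ r, c = r * b := ⟨c / b, (div_mul_cancel₀ c hb).symm⟩
  rw [mul_div_cancel_right₀ r hb]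
  ring

theorem stmt3_general (n : ℕ) (b c : ℝ) (hb : b ≠ 0)
    (K : ℕ → ℝ)
    (hrec : ∀ i : ℕ, 1 ≤ i → i ≤ n - 1 →
      ((n : ℝ) * c + (i : ℝ) * b - (i : ℝ) * c) * K i
        = ((n : ℝ) - (i : ℝ)) * b * K (i + 1) + (i : ℝ) * c * K (i - 1))
    (hinit : K 1 = (c / b) * K 0) :
    ∀ i ≤ n, K i = (c / b) ^ i * K 0 := by
  refine eq_of_linearRecurrence (a := fun j => ((n : ℝ) - (j + 1 : ℕ)) * b)
    (p := fun j => (n : ℝ) * c + (j + 1 : ℕ) * b - (j + 1 : ℕ) * c)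
    (q := fun j => -((j + 1 : ℕ) * c)) ?_ ?_ ?_ (by simp) (by simpa using hinit)
  · intro j hj
    have hjn : ((j + 1 : ℕ) : ℝ) < n := by exact_mod_cast (by omega : j + 1 < n)
    exact mul_ne_zero (sub_ne_zero.mpr hjn.ne') hb
  · intro j hj
    have h := hrec (j + 1) (by omega) (by omega)
    simp only [Nat.add_sub_cancel] at h
    linear_combination -h
  · intro j _
    simp only [← mul_assoc, ← add_mul]
    rw [geom_div_pow_recurrence hb]

/-- The recurrence for the leading coefficients of the mixed moments of the
Bagchi–Pal process has solution `K i = (c/b)^i * K 0`. -/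
theorem stmt3 (n : ℕ) (hn : 1 ≤ n) (b c : ℝ) (hb : b ≠ 0)
    (hnz : ∀ i : ℕ, i ≤ n → (n : ℝ) * c + (i : ℝ) * (b - c) ≠ 0)
    (K : ℕ → ℝ)
    (hrec : ∀ i : ℕ, 1 ≤ i → i ≤ n - 1 →
      ((n : ℝ) * c + (i : ℝ) * b - (i : ℝ) * c) * K i
        = ((n : ℝ) - (i : ℝ)) * b * K (i + 1) + (i : ℝ) * c * K (i - 1))
    (hinit : K 1 = (c / b) * K 0) :
    ∀ i ≤ n, K i = (c / b) ^ i * K 0 :=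
  stmt3_general n b c hb K hrec hinit
end

section
/- Let k > 0, τ₀ > 0, and let τ(t) be a pure birth (Yule-type) process in which τ(0) = τ₀ and each unit contributes rate 1, with k units added at each event; equivalently suppose that for each n ≥ 1 the function m_n(t) = E[τ^n(t)] satisfies the ODE system m_n'(t) = ∑_{r=0}^{n−1} C(n,r) k^{n−r} m_{r+1}(t) with m_0(t) = 1 and m_n(0) = τ₀^n. Then m_n(t) = k^n ∑_{i=1}^{n} (−1)^{n−i} S(n,i) ⟨τ₀/k⟩_i e^{k i t}, where S(n,i) is the Stirling number of the second kind and ⟨x⟩_i is the rising factorial. -/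
/-!
The moment equations are triangular: once `m 1, …, m (n - 1)` are known, `m n` solves the
scalar linear ODE `y' = n k y + (known forcing)`, so by induction on `n` and uniqueness for
Lipschitz ODEs the system has at most one solution with the given initial values. It remains
to check that the claimed formula solves it. With `b(n, i) = (-1)^(n+i) S(n, i)` and
`⟨y⟩_i = y (y + 1) ⋯ (y + i - 1)`, this reduces to two identities:
`y^n = ∑ᵢ b(n, i) ⟨y⟩_i` gives the initial values, and
`∑_{r<n} C(n, r) b(r + 1, i) = i b(n, i)` gives the ODE. The second one says that `⟨y⟩_i` is an
eigenvector, with eigenvalue `i`, of the generator `f ↦ y (f (y + 1) - f y)` of the process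
(measured in units of `k`), which sends `y^n` to `∑_{r<n} C(n, r) y^(r+1)`.
-/

open Finset

def stirling2 : ℕ → ℕ → ℕ
  | 0, 0 => 1
  | 0, _ + 1 => 0
  | _ + 1, 0 => 0
  | n + 1, k + 1 => (k + 1) * stirling2 n (k + 1) + stirling2 n k

theorem stirling2_eq_stirlingSecond : stirling2 = Nat.stirlingSecond := by
  funext n i
  induction n generalizing i with
  | zero => cases i <;> rfl
  | succ n ih => cases i <;> simp [stirling2, Nat.stirlingSecond_succ_succ, ih]

/-- The sign `(-1)^(n+i)` agrees with the paper's `(-1)^(n-i)` whenever `S(n, i) ≠ 0`, and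
avoids truncated subtraction. -/
def signedStirling2 (n i : ℕ) : ℤ := (-1) ^ (n + i) * Nat.stirlingSecond n i

@[simp]
theorem signedStirling2_zero_zero : signedStirling2 0 0 = 1 := rfl

@[simp]
theorem signedStirling2_succ_zero (n : ℕ) : signedStirling2 (n + 1) 0 = 0 := by
  simp [signedStirling2]

theorem signedStirling2_succ_succ (n i : ℕ) :
    signedStirling2 (n + 1) (i + 1) = signedStirling2 n i - (i + 1) * signedStirling2 n (i + 1) := by
  simp only [signedStirling2, Nat.stirlingSecond_succ_succ]
  push_cast
  ring

theorem signedStirling2_eq_zero_of_lt {n i : ℕ} (h : n < i) : signedStirling2 n i = 0 := by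
  simp [signedStirling2, Nat.stirlingSecond_eq_zero_of_lt h]

theorem sum_signedStirling2_mul_prod_range_add_eq_pow {R : Type*} [CommRing R] (x : R) (n : ℕ) :
    ∑ i ∈ range (n + 1), (signedStirling2 n i : R) * ∏ j ∈ range i, (x + j) = x ^ n := by
  induction n with
  | zero => simp
  | succ n ih =>
    set P : ℕ → R := fun i ↦ ∏ j ∈ range i, (x + j)
    have hshift : ∑ i ∈ range (n + 1), ((i + 1 : ℕ) : R) * signedStirling2 n (i + 1) * P (i + 1)
        = ∑ i ∈ range (n + 1), (i : R) * signedStirling2 n i * P i := by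
      have h := (sum_range_succ' (fun i ↦ (i : R) * signedStirling2 n i * P i) (n + 1)).symm.trans
        (sum_range_succ _ _)
      simpa [signedStirling2_eq_zero_of_lt (Nat.lt_succ_self n)] using h
    calc ∑ i ∈ range (n + 2), (signedStirling2 (n + 1) i : R) * P i
        = ∑ i ∈ range (n + 1), ((signedStirling2 n i : R) * P i * (x + i)
            - ((i + 1 : ℕ) : R) * signedStirling2 n (i + 1) * P (i + 1)) := by
          rw [sum_range_succ']
          simp only [signedStirling2_succ_succ, signedStirling2_succ_zero, P, prod_range_succ]
          push_cast
          simp only [zero_mul, add_zero]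
          exact sum_congr rfl fun i _ ↦ by ring
      _ = x * ∑ i ∈ range (n + 1), (signedStirling2 n i : R) * P i := by
          rw [sum_sub_distrib, hshift, mul_sum, ← sum_sub_distrib]
          exact sum_congr rfl fun i _ ↦ by ring
      _ = x ^ (n + 1) := by rw [ih, pow_succ']

theorem sum_choose_mul_signedStirling2_succ_succ (n i : ℕ) :
    ∑ r ∈ range (n + 1), (n.choose r : ℤ) * signedStirling2 (r + 1) (i + 1)
      = signedStirling2 n i := by
  induction n generalizing i with
  | zero => cases i <;> simp [signedStirling2, Nat.stirlingSecond_succ_succ]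
  | succ n ih =>
    rw [sum_choose_succ_mul (fun r _ ↦ signedStirling2 (r + 1) (i + 1)), ih]
    simp only [signedStirling2_succ_succ (_ + 1), mul_sub, sum_sub_distrib]
    rcases i with _ | j
    · simp [ih 0]
    · simp only [mul_left_comm _ ((_ : ℤ) + 1), ← mul_sum]
      rw [ih, ih, signedStirling2_succ_succ n j]
      push_cast
      ring

theorem sum_choose_mul_signedStirling2_succ (n i : ℕ) :
    ∑ r ∈ range n, (n.choose r : ℤ) * signedStirling2 (r + 1) i = i * signedStirling2 n i := by
  rcases i with _ | j
  · simp
  · have h := sum_choose_mul_signedStirling2_succ_succ n j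
    rw [sum_range_succ, Nat.choose_self, signedStirling2_succ_succ] at h
    push_cast at h ⊢
    linear_combination h

theorem moment_ODE_solution_unique {k : ℝ} {m M : ℕ → ℝ → ℝ}
    (hm : ∀ n, 1 ≤ n → ∀ t,
      HasDerivAt (m n) (∑ r ∈ range n, (n.choose r : ℝ) * k ^ (n - r) * m (r + 1) t) t)
    (hM : ∀ n, 1 ≤ n → ∀ t,
      HasDerivAt (M n) (∑ r ∈ range n, (n.choose r : ℝ) * k ^ (n - r) * M (r + 1) t) t)
    (h0 : ∀ n, 1 ≤ n → m n 0 = M n 0) :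
    ∀ n, 1 ≤ n → m n = M n := by
  intro n
  induction n using Nat.strong_induction_on with
  | _ n ih =>
  intro hn
  obtain ⟨p, rfl⟩ : ∃ p, n = p + 1 := ⟨n - 1, by omega⟩
  set F : ℝ → ℝ := fun t ↦ ∑ r ∈ range p, ((p + 1).choose r : ℝ) * k ^ (p + 1 - r) * m (r + 1) t
  have hsplit (f : ℕ → ℝ → ℝ) (t : ℝ) :
      ∑ r ∈ range (p + 1), ((p + 1).choose r : ℝ) * k ^ (p + 1 - r) * f (r + 1) t
        = ∑ r ∈ range p, ((p + 1).choose r : ℝ) * k ^ (p + 1 - r) * f (r + 1) t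
          + (p + 1) * k * f (p + 1) t := by
    rw [sum_range_succ, Nat.choose_succ_self_right, Nat.add_sub_cancel_left, pow_one]
    push_cast
    ring
  have hlower (t : ℝ) :
      ∑ r ∈ range p, ((p + 1).choose r : ℝ) * k ^ (p + 1 - r) * M (r + 1) t = F t :=
    sum_congr rfl fun r hr ↦ by rw [ih (r + 1) (by simpa using hr) (by omega)]
  refine ODE_solution_unique_univ (v := fun t y ↦ F t + (p + 1) * k * y) (s := fun _ ↦ Set.univ)
    (K := ‖((p : ℝ) + 1) * k‖₊) (t₀ := 0) (fun t ↦ ?_) (fun t ↦ ⟨?_, Set.mem_univ _⟩)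
    (fun t ↦ ⟨?_, Set.mem_univ _⟩) (h0 _ hn)
  · refine (LipschitzWith.of_dist_le_mul fun y z ↦ ?_).lipschitzOnWith
    simp [Real.dist_eq, ← mul_sub, abs_mul]
  · simpa only [hsplit] using hm _ hn t
  · simpa only [hsplit, hlower] using hM _ hn t

noncomputable def stirlingMoment (k x : ℝ) (n : ℕ) (t : ℝ) : ℝ :=
  k ^ n * ∑ i ∈ range (n + 1),
    (signedStirling2 n i : ℝ) * (∏ j ∈ range i, (x + j)) * Real.exp (k * i * t)

theorem stirlingMoment_eq_sum_range {n N : ℕ} (h : n < N) (k x t : ℝ) :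
    stirlingMoment k x n t = k ^ n * ∑ i ∈ range N,
      (signedStirling2 n i : ℝ) * (∏ j ∈ range i, (x + j)) * Real.exp (k * i * t) := by
  refine congrArg (k ^ n * ·) (sum_subset (range_subset_range.2 h) fun i _ hi ↦ ?_)
  simp [signedStirling2_eq_zero_of_lt (by simpa using hi : n < i)]

theorem stirlingMoment_eq_sum_Icc {n : ℕ} (hn : 1 ≤ n) (k x t : ℝ) :
    stirlingMoment k x n t = k ^ n * ∑ i ∈ Icc 1 n,
      (-1 : ℝ) ^ (n - i) * (stirling2 n i : ℝ) * (∏ j ∈ range i, (x + j))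
        * Real.exp (k * i * t) := by
  have hsub : Icc 1 n ⊆ range (n + 1) := fun i hi ↦ by simp at hi ⊢; omega
  rw [stirlingMoment, ← sum_subset hsub fun i hi hi' ↦ ?_]
  · refine congrArg (k ^ n * ·) (sum_congr rfl fun i hi ↦ ?_)
    obtain ⟨d, rfl⟩ : ∃ d, n = i + d := ⟨n - i, by simp at hi; omega⟩
    have hsign : (-1 : ℝ) ^ (i + d + i) = (-1) ^ (i + d - i) := by
      rw [Nat.add_sub_cancel_left, show i + d + i = d + 2 * i by ring, pow_add, pow_mul]
      simp
    simp [signedStirling2, stirling2_eq_stirlingSecond, hsign]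
  · obtain rfl : i = 0 := by simp at hi hi'; omega
    obtain ⟨p, rfl⟩ : ∃ p, n = p + 1 := ⟨n - 1, by omega⟩
    simp

theorem stirlingMoment_zero_right (k x : ℝ) (n : ℕ) : stirlingMoment k x n 0 = (k * x) ^ n := by
  simp [stirlingMoment, sum_signedStirling2_mul_prod_range_add_eq_pow, mul_pow]

theorem hasDerivAt_stirlingMoment (k x : ℝ) (n : ℕ) (t : ℝ) :
    HasDerivAt (stirlingMoment k x n)
      (∑ r ∈ range n, (n.choose r : ℝ) * k ^ (n - r) * stirlingMoment k x (r + 1) t) t := by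
  have hexp (i : ℕ) :
      HasDerivAt (fun s ↦ Real.exp (k * i * s)) (k * i * Real.exp (k * i * t)) t := by
    simpa [mul_comm] using ((hasDerivAt_id t).const_mul (k * i)).exp
  have hM : HasDerivAt (stirlingMoment k x n) (k ^ n * ∑ i ∈ range (n + 1),
      (signedStirling2 n i : ℝ) * (∏ j ∈ range i, (x + j)) * (k * i * Real.exp (k * i * t))) t :=
    (HasDerivAt.fun_sum fun i _ ↦ (hexp i).const_mul
      ((signedStirling2 n i : ℝ) * ∏ j ∈ range i, (x + j))).const_mul (k ^ n)
  refine hM.congr_deriv (Eq.symm ?_)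
  have hcoeff (i : ℕ) := congrArg (Int.cast : ℤ → ℝ) (sum_choose_mul_signedStirling2_succ n i)
  push_cast at hcoeff
  calc ∑ r ∈ range n, (n.choose r : ℝ) * k ^ (n - r) * stirlingMoment k x (r + 1) t
      = ∑ r ∈ range n, ∑ i ∈ range (n + 1), k ^ (n + 1) * ((n.choose r : ℝ) *
          signedStirling2 (r + 1) i) * ((∏ j ∈ range i, (x + j)) * Real.exp (k * i * t)) := by
        refine sum_congr rfl fun r hr ↦ ?_
        have hrn : r + 1 < n + 1 := by simpa using hr
        rw [stirlingMoment_eq_sum_range hrn, mul_sum, mul_sum]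
        refine sum_congr rfl fun i _ ↦ ?_
        rw [← pow_sub_mul_pow k (by omega : r + 1 ≤ n + 1), Nat.add_sub_add_right]
        ring
    _ = _ := by
        rw [sum_comm, mul_sum]
        refine sum_congr rfl fun i _ ↦ ?_
        rw [← sum_mul, ← mul_sum, hcoeff]
        ring

theorem stmt6_general (k τ0 : ℝ) (hk : 0 < k)
    (m : ℕ → ℝ → ℝ)
    (hinit : ∀ n, 1 ≤ n → m n 0 = τ0 ^ n)
    (hdiff : ∀ n, 1 ≤ n → Differentiable ℝ (m n))
    (hode : ∀ n, 1 ≤ n → ∀ t, deriv (m n) t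
      = ∑ r ∈ range n, (n.choose r : ℝ) * k ^ (n - r) * m (r + 1) t) :
    ∀ n, 1 ≤ n → ∀ t, m n t = k ^ n * ∑ i ∈ Icc 1 n,
      (-1 : ℝ) ^ (n - i) * (stirling2 n i : ℝ)
        * (∏ j ∈ range i, (τ0 / k + (j : ℝ))) * Real.exp (k * (i : ℝ) * t) := by
  have hm : ∀ n, 1 ≤ n → m n = stirlingMoment k (τ0 / k) n :=
    moment_ODE_solution_unique (fun n hn t ↦ hode n hn t ▸ (hdiff n hn t).hasDerivAt)
      (fun n _ t ↦ hasDerivAt_stirlingMoment _ _ n t)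
      (fun n hn ↦ by rw [hinit n hn, stirlingMoment_zero_right, mul_div_cancel₀ _ hk.ne'])
  intro n hn t
  rw [hm n hn, stirlingMoment_eq_sum_Icc hn]

/-- Lemma 3 of the paper: the exact moments of the total number of balls in a
tenable balanced Pólya process with balance factor `k`, where `m n t = E[τ^n(t)]`
and `∏ j in range i, (τ0/k + j)` is the rising factorial `⟨τ0/k⟩_i`. -/
theorem stmt6 (k τ0 : ℝ) (hk : 0 < k) (hτ0 : 0 < τ0)
    (m : ℕ → ℝ → ℝ)
    (h0 : ∀ t, m 0 t = 1)
    (hinit : ∀ n, 1 ≤ n → m n 0 = τ0 ^ n)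
    (hdiff : ∀ n, 1 ≤ n → Differentiable ℝ (m n))
    (hode : ∀ n, 1 ≤ n → ∀ t, deriv (m n) t
      = ∑ r ∈ range n, (n.choose r : ℝ) * k ^ (n - r) * m (r + 1) t) :
    ∀ n, 1 ≤ n → ∀ t, m n t = k ^ n * ∑ i ∈ Icc 1 n,
      (-1 : ℝ) ^ (n - i) * (stirling2 n i : ℝ)
        * (∏ j ∈ range i, (τ0 / k + (j : ℝ))) * Real.exp (k * (i : ℝ) * t) :=
  stmt6_general k τ0 hk m hinit hdiff hode
end

section
/- Fix n ≥ 1 and real numbers k, b, c. Let A_n be the (n+1)×(n+1) tridiagonal matrix with entries A[i][i] = n(k−b) − i(c−b) for 0 ≤ i ≤ n, superdiagonal entries A[i][i+1] = (n−i)·c, and subdiagonal entries A[i+1][i] = (i+1)·b for 0 ≤ i ≤ n−1. Then the characteristic polynomial of A_n is ∏_{s=0}^{n} (λ − (n·k − s·(b+c))); in particular the eigenvalues of A_n are λ_s = n·k − s·(b+c) for s = 0, 1, …, n. -/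
/-!
`Aᵀ` is the matrix, in the basis `x ^ (n - i) * y ^ i`, of the derivation
`((k - b) x + c y) ∂ₓ + (b x + (k - c) y) ∂ᵧ` on binary forms of degree `n`. It is induced by the
`2 × 2` matrix `!![k - b, c; b, k - c]`, whose eigenvalues are `k` and `k - (b + c)`, the latter
with eigenvector `(1, -1)` whatever `b` and `c` are. A unipotent change of variables through that
eigenvector triangularises the `2 × 2` matrix; on forms of degree `n` it acts by the Pascal matrix
`(i.choose j)`, so `pascalMatrix * A = U * pascalMatrix` with `U` upper bidiagonal, with diagonal
entries `n k - (n - i) (b + c)`.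
-/

open Polynomial Finset

theorem Nat.succ_mul_cast_choose_succ {R : Type*} [CommRing R] (n k : ℕ) :
    ((k : R) + 1) * (n.choose (k + 1) : R) = ((n : R) - k) * (n.choose k : R) := by
  rcases le_or_gt k n with hk | hk
  · have h := congrArg (Nat.cast : ℕ → R) (Nat.choose_succ_right_eq n k)
    push_cast [hk] at h
    linear_combination h
  · simp [Nat.choose_eq_zero_of_lt hk, Nat.choose_eq_zero_of_lt (Nat.lt_succ_of_lt hk)]

namespace Matrix

theorem charpoly_eq_of_mul_eq_mul {n R : Type*} [Fintype n] [DecidableEq n] [CommRing R]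
    {P A B : Matrix n n R} (hP : IsUnit P.det) (h : P * A = B * P) :
    A.charpoly = B.charpoly := by
  have hA : A = P⁻¹ * (B * P) := by
    rw [← h, ← Matrix.mul_assoc, nonsing_inv_mul _ hP, Matrix.one_mul]
  rw [hA, charpoly_mul_comm, Matrix.mul_assoc, mul_nonsing_inv _ hP, Matrix.mul_one]

def pascalMatrix (m : ℕ) (R : Type*) [Semiring R] : Matrix (Fin m) (Fin m) R :=
  of fun i j => ((i : ℕ).choose j : R)

theorem det_pascalMatrix (m : ℕ) (R : Type*) [CommRing R] : (pascalMatrix m R).det = 1 := by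
  rw [det_of_isLowerTriangular _ fun i j (h : i < j) => by
    simp [pascalMatrix, Nat.choose_eq_zero_of_lt (Fin.lt_def.mp h)]]
  simp [pascalMatrix]

end Matrix

namespace BagchiPal

open Matrix

variable {R : Type*} [CommRing R] (n : ℕ) (k b c : R)

def entry (i j : ℕ) : R :=
  if i = j then (n : R) * (k - b) - (i : R) * (c - b)
  else if j = i + 1 then ((n : R) - (i : R)) * c
  else if i = j + 1 then (i : R) * b
  else 0

def bidiagEntry (i j : ℕ) : R :=
  (if i = j then (n : R) * k - ((n : R) - i) * (b + c) else 0)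
  + (if i + 1 = j then ((n : R) - i) * c else 0)

def bidiag : Matrix (Fin (n + 1)) (Fin (n + 1)) R :=
  of fun i j => bidiagEntry n k b c i j

theorem entry_eq_add (i j : ℕ) :
    entry n k b c i j =
      (if i = j then (n : R) * (k - b) - (j : R) * (c - b) else 0)
      + (if i + 1 = j then ((n : R) - i) * c else 0)
      + (if i = j + 1 then ((j + 1 : ℕ) : R) * b else 0) := by
  unfold entry
  split_ifs <;> first | omega | (subst_vars; push_cast; ring)

theorem sum_choose_mul_entry {i j : ℕ} (hi : i ≤ n) (hj : j ≤ n) :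
    ∑ m ∈ range (n + 1), (i.choose m : R) * entry n k b c m j =
      ∑ m ∈ range (n + 1), bidiagEntry n k b c i m * (m.choose j : R) := by
  simp only [entry_eq_add, bidiagEntry, mul_add, add_mul, sum_add_distrib, mul_ite,
    mul_zero, ite_mul, zero_mul, sum_ite_eq', sum_ite_eq, mem_range]
  -- the boundary terms at index `n + 1` vanish anyway: `i.choose (n + 1) = 0` and `n - n = 0`
  have hsub : (if j + 1 < n + 1 then (i.choose (j + 1) : R) * (((j + 1 : ℕ) : R) * b) else 0)
      = (i.choose (j + 1) : R) * (((j + 1 : ℕ) : R) * b) := ite_eq_left_iff.2 fun _ => by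
    rw [Nat.choose_eq_zero_of_lt (by omega), Nat.cast_zero, zero_mul]
  have hsup : (if i + 1 < n + 1 then ((n : R) - i) * c * ((i + 1).choose j : R) else 0)
      = ((n : R) - i) * c * ((i + 1).choose j : R) := ite_eq_left_iff.2 fun _ => by
    rw [show i = n by omega, sub_self, zero_mul, zero_mul]
  rw [hsub, hsup, if_pos (by omega), if_pos (by omega)]
  rcases j with _ | j
  · simp only [Nat.choose_zero_right, Nat.choose_one_right, Nat.cast_one, Nat.cast_zero, zero_mul,
      sub_zero, one_mul, mul_one, Nat.add_eq_zero_iff, one_ne_zero, and_false, ↓reduceIte,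
      sum_const_zero, add_zero, zero_add]
    ring
  · have e₀ := Nat.succ_mul_cast_choose_succ (R := R) i j
    have e₁ := Nat.succ_mul_cast_choose_succ (R := R) i (j + 1)
    simp only [Nat.add_right_cancel_iff, sum_ite_eq', mem_range, if_pos (show j < n + 1 by omega),
      Nat.choose_succ_succ', Nat.cast_add]
    push_cast at e₁ ⊢
    linear_combination b * e₁ - c * e₀

theorem pascalMatrix_mul_eq {A : Matrix (Fin (n + 1)) (Fin (n + 1)) R}
    (hA : ∀ i j : Fin (n + 1), A i j = entry n k b c i j) :
    pascalMatrix (n + 1) R * A = bidiag n k b c * pascalMatrix (n + 1) R := by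
  ext i j
  simp only [mul_apply, pascalMatrix, bidiag, of_apply, hA]
  rw [Fin.sum_univ_eq_sum_range (fun m => (i.val.choose m : R) * entry n k b c m j),
    Fin.sum_univ_eq_sum_range (fun m => bidiagEntry n k b c i m * (m.choose j : R)),
    sum_choose_mul_entry n k b c (Nat.lt_succ_iff.mp i.2) (Nat.lt_succ_iff.mp j.2)]

theorem charpoly_bidiag :
    (bidiag n k b c).charpoly =
      ∏ i : Fin (n + 1), (X - C ((n : R) * k - ((n : R) - i) * (b + c))) := by
  rw [charpoly_of_isUpperTriangular _ fun i j (h : j < i) => by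
    simp [bidiag, bidiagEntry, (Fin.lt_def.mp h).ne', show ¬ (i : ℕ) + 1 = j by omega]]
  simp [bidiag, bidiagEntry]

end BagchiPal

open BagchiPal in
theorem stmt10_general (n : ℕ) (k b c : ℝ)
    (A : Matrix (Fin (n + 1)) (Fin (n + 1)) ℝ)
    (hA : ∀ i j : Fin (n + 1), A i j =
      if (i : ℕ) = (j : ℕ) then (n : ℝ) * (k - b) - (i : ℝ) * (c - b)
      else if (j : ℕ) = (i : ℕ) + 1 then ((n : ℝ) - (i : ℝ)) * c
      else if (i : ℕ) = (j : ℕ) + 1 then (i : ℝ) * b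
      else 0) :
    A.charpoly = ∏ s ∈ Finset.range (n + 1),
      (X - C ((n : ℝ) * k - (s : ℝ) * (b + c))) := by
  rw [Matrix.charpoly_eq_of_mul_eq_mul (by simp [Matrix.det_pascalMatrix])
      (pascalMatrix_mul_eq n k b c hA), charpoly_bidiag,
    ← Fin.prod_univ_eq_prod_range (fun s => X - C ((n : ℝ) * k - (s : ℝ) * (b + c))),
    ← Equiv.prod_comp Fin.revPerm]
  refine Finset.prod_congr rfl fun i _ => ?_
  rw [Fin.revPerm_apply, Fin.val_rev, Nat.cast_sub (by omega)]
  congr 2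
  push_cast
  ring

/-- The characteristic polynomial of the Krawtchouk-type tridiagonal moment matrix
of the Bagchi–Pal process is `∏_{s=0}^{n} (λ − (nk − s(b+c)))`. -/
theorem stmt10 (n : ℕ) (hn : 1 ≤ n) (k b c : ℝ)
    (A : Matrix (Fin (n + 1)) (Fin (n + 1)) ℝ)
    (hA : ∀ i j : Fin (n + 1), A i j =
      if (i : ℕ) = (j : ℕ) then (n : ℝ) * (k - b) - (i : ℝ) * (c - b)
      else if (j : ℕ) = (i : ℕ) + 1 then ((n : ℝ) - (i : ℝ)) * c
      else if (i : ℕ) = (j : ℕ) + 1 then (i : ℝ) * b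
      else 0) :
    A.charpoly = ∏ s ∈ Finset.range (n + 1),
      (X - C ((n : ℝ) * k - (s : ℝ) * (b + c))) :=
  stmt10_general n k b c A hA
end

section
/- Let k > 0 and τ₀ > 0, and for each t ≥ 0 let X_t be a nonnegative random variable with E[X_t^n] = k^n ∑_{i=1}^{n} (−1)^{n−i} S(n,i) ⟨τ₀/k⟩_i e^{k i t} for all n ≥ 1. Then for every n ≥ 1, lim_{t→∞} E[(e^{−kt} X_t)^n] = k^n ⟨τ₀/k⟩_n, which equals the n-th moment of a Gamma(τ₀/k, k) random variable (shape τ₀/k, scale k). -/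
/-!
After scaling by `e^{-kt}`, the `n`-th moment is a finite combination of the exponentials
`e^{k(i-n)t}`, `1 ≤ i ≤ n`. All of them decay except the top one, whose coefficient is
`k^n S(n,n) ⟨τ₀/k⟩_n = k^n ⟨τ₀/k⟩_n`. On the other side, Euler's integral
`∫₀^∞ x^{s+n-1} e^{-x/θ} dx = θ^{s+n} Γ(s+n)` and `Γ(s+n) = Γ(s) ⟨s⟩_n` show that
`θ^n ⟨s⟩_n` is the `n`-th moment of Gamma(`s`, `θ`).
-/

open Filter Finset MeasureTheory

theorem stirling2_eq_zero_of_lt {n j : ℕ} (h : n < j) : stirling2 n j = 0 := by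
  induction n generalizing j with
  | zero => obtain ⟨j, rfl⟩ := Nat.exists_eq_succ_of_ne_zero (by omega : j ≠ 0); rfl
  | succ n ih =>
    obtain ⟨j, rfl⟩ := Nat.exists_eq_succ_of_ne_zero (by omega : j ≠ 0)
    simp only [stirling2, ih (by omega : n < j + 1), ih (by omega : n < j), mul_zero]

theorem stirling2_self (n : ℕ) : stirling2 n n = 1 := by
  induction n with
  | zero => rfl
  | succ n ih => simp only [stirling2, stirling2_eq_zero_of_lt (Nat.lt_succ_self n), ih, mul_zero]

theorem Real.Gamma_add_nat_eq_mul_prod {s : ℝ} (hs : ∀ m : ℕ, s + m ≠ 0) (n : ℕ) :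
    Real.Gamma (s + n) = Real.Gamma s * ∏ j ∈ range n, (s + j) := by
  induction n with
  | zero => simp
  | succ n ih =>
    rw [Nat.cast_succ, ← add_assoc, Real.Gamma_add_one (hs n), ih, prod_range_succ]
    ring

theorem integral_pow_mul_gammaDensity {s θ : ℝ} (hs : 0 < s) (hθ : 0 < θ) (n : ℕ) :
    ∫ x in Set.Ioi (0 : ℝ), x ^ n * (x ^ (s - 1) * Real.exp (-x / θ)
        / (θ ^ s * Real.Gamma s)) = θ ^ n * ∏ j ∈ range n, (s + j) := by
  have hintegrand : ∀ x ∈ Set.Ioi (0 : ℝ), x ^ n * (x ^ (s - 1) * Real.exp (-x / θ)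
      / (θ ^ s * Real.Gamma s))
        = x ^ ((n + s) - 1) * Real.exp (-(1 / θ * x)) / (θ ^ s * Real.Gamma s) := by
    intro x hx
    rw [add_sub_assoc, Real.rpow_add hx, Real.rpow_natCast]
    ring_nf
  rw [setIntegral_congr_fun measurableSet_Ioi hintegrand, integral_div,
    Real.integral_rpow_mul_exp_neg_mul_Ioi (by positivity) (by positivity), one_div_one_div,
    Real.rpow_add hθ, Real.rpow_natCast, add_comm (n : ℝ),
    Real.Gamma_add_nat_eq_mul_prod (fun m => by positivity)]
  field_simp [(Real.Gamma_pos_of_pos hs).ne']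

theorem tendsto_exp_neg_mul_pow_mul_sum_exp {k : ℝ} (hk : 0 < k) (a : ℕ → ℝ) {S : Finset ℕ}
    {n : ℕ} (hS : ∀ i ∈ S, i ≤ n) (hn : n ∈ S) :
    Tendsto (fun t => Real.exp (-k * t) ^ n * ∑ i ∈ S, a i * Real.exp (k * i * t)) atTop
      (nhds (a n)) := by
  have hterm : ∀ t, Real.exp (-k * t) ^ n * ∑ i ∈ S, a i * Real.exp (k * i * t)
      = ∑ i ∈ S, a i * Real.exp (k * ((i : ℝ) - n) * t) := by
    intro t
    rw [mul_sum]
    refine sum_congr rfl fun i _ => ?_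
    rw [← Real.exp_nat_mul, mul_left_comm, ← Real.exp_add]
    ring_nf
  simp_rw [hterm]
  rw [← sum_ite_eq_of_mem' S n a hn]
  refine tendsto_finsetSum _ fun i hi => ?_
  split_ifs with hin
  · subst hin
    simp
  · have hneg : k * ((i : ℝ) - n) < 0 :=
      mul_neg_of_pos_of_neg hk (sub_neg.mpr (by exact_mod_cast (hS i hi).lt_of_ne hin))
    simpa using (Real.tendsto_exp_atBot.comp
      (tendsto_id.const_mul_atTop_of_neg hneg)).const_mul (a i)

theorem stmt17_general {Ω : Type*} [MeasurableSpace Ω] (μ : Measure Ω)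
    (k τ0 : ℝ) (hk : 0 < k) (hτ0 : 0 < τ0)
    (X : ℝ → Ω → ℝ)
    (hmom : ∀ t ≥ (0:ℝ), ∀ n : ℕ, 1 ≤ n →
      ∫ ω, (X t ω) ^ n ∂μ = k ^ n * ∑ i ∈ Icc 1 n,
        (-1 : ℝ) ^ (n - i) * (stirling2 n i : ℝ)
          * (∏ j ∈ range i, (τ0 / k + (j : ℝ))) * Real.exp (k * (i : ℝ) * t)) :
    ∀ n : ℕ, 1 ≤ n →
      Tendsto (fun t => ∫ ω, (Real.exp (-k * t) * X t ω) ^ n ∂μ) atTop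
        (nhds (k ^ n * ∏ j ∈ range n, (τ0 / k + (j : ℝ)))) ∧
      k ^ n * ∏ j ∈ range n, (τ0 / k + (j : ℝ))
        = ∫ x in Set.Ioi (0 : ℝ),
            x ^ n * (x ^ (τ0 / k - 1) * Real.exp (-x / k)
              / (k ^ (τ0 / k) * Real.Gamma (τ0 / k))) := by
  intro n hn
  refine ⟨?_, (integral_pow_mul_gammaDensity (div_pos hτ0 hk) hk n).symm⟩
  have hlim := (tendsto_exp_neg_mul_pow_mul_sum_exp hk
    (fun i => (-1 : ℝ) ^ (n - i) * (stirling2 n i : ℝ) * ∏ j ∈ range i, (τ0 / k + (j : ℝ)))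
    (S := Icc 1 n) (fun i hi => (mem_Icc.mp hi).2) (mem_Icc.mpr ⟨hn, le_rfl⟩)).const_mul (k ^ n)
  simp only [Nat.sub_self, pow_zero, stirling2_self, Nat.cast_one, one_mul] at hlim
  refine hlim.congr' ?_
  filter_upwards [eventually_ge_atTop 0] with t ht
  simp only [mul_pow, integral_const_mul, hmom t ht n hn]
  ring

/-- The scaled total ball count `e^{-kt} τ(t)` has all moments converging to
those of a Gamma(τ₀/k, k) random variable (shape τ₀/k, scale k). -/
theorem stmt17 {Ω : Type*} [MeasurableSpace Ω] (μ : Measure Ω) [IsProbabilityMeasure μ]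
    (k τ0 : ℝ) (hk : 0 < k) (hτ0 : 0 < τ0)
    (X : ℝ → Ω → ℝ) (hXnn : ∀ t ω, 0 ≤ X t ω)
    (hmom : ∀ t ≥ (0:ℝ), ∀ n : ℕ, 1 ≤ n →
      ∫ ω, (X t ω) ^ n ∂μ = k ^ n * ∑ i ∈ Icc 1 n,
        (-1 : ℝ) ^ (n - i) * (stirling2 n i : ℝ)
          * (∏ j ∈ range i, (τ0 / k + (j : ℝ))) * Real.exp (k * (i : ℝ) * t)) :
    ∀ n : ℕ, 1 ≤ n →
      Tendsto (fun t => ∫ ω, (Real.exp (-k * t) * X t ω) ^ n ∂μ) atTop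
        (nhds (k ^ n * ∏ j ∈ range n, (τ0 / k + (j : ℝ)))) ∧
      k ^ n * ∏ j ∈ range n, (τ0 / k + (j : ℝ))
        = ∫ x in Set.Ioi (0 : ℝ),
            x ^ n * (x ^ (τ0 / k - 1) * Real.exp (-x / k)
              / (k ^ (τ0 / k) * Real.Gamma (τ0 / k))) :=
  stmt17_general μ k τ0 hk hτ0 X hmom
end
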